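/- Let ν be a probability measure on [0,1] giving measure zero to the rationals and satisfying (1/9)(H₀)_*ν + (2/9) Σ_{i=1}^{4} (H_i)_*ν = ν. Let λ be the law of S₂·W^{S₁}, where W ~ ν and S₁, S₂ are independent random signs (P(S_i=±1)=1/2) independent of W. Then λ is stationary for the random walk: (1/9) Σ_{i=0}^{8} (h_i)_*λ = λ. -/

import Mathlib

open MeasureTheory ProbabilityTheory Filter
open scoped ENNReal

noncomputable def hMap : Fin 9 → ℝ → ℝ :=
  ![fun x => -x⁻¹,
    fun x => 1 + x,
    fun x => x - 1,
    fun x => 1 - x⁻¹,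
    fun x => -1 - x⁻¹,
    fun x => x / (1 + x),
    fun x => x / (1 - x),
    fun x => -(1 + x)⁻¹,
    fun x => (1 - x)⁻¹]

noncomputable def Cfun (x : ℝ) : ℝ := min |x| |x|⁻¹

noncomputable def HMap : Fin 5 → ℝ → ℝ :=
  ![fun x => x,
    fun x => (1 + x)⁻¹,
    fun x => 1 - x,
    fun x => min (x / (1 - x)) ((1 - x) / x),
    fun x => x / (1 + x)]

noncomputable def cfVal (k : ℕ → ℕ) : ℝ :=
  limUnder atTop (fun n => (((List.range n).map k).foldr (fun a r => ((a : ℝ) + r)⁻¹) 0))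

noncomputable def geomHalf : Measure ℕ :=
  Measure.sum (fun n => ((2 : ℝ≥0∞) ^ (n + 1))⁻¹ • Measure.dirac (n + 1))

noncomputable def bern : Measure ℝ :=
  (2 : ℝ≥0∞)⁻¹ • (Measure.dirac 1 + Measure.dirac (-1))

/-- `μ` is the law of the random continued fraction `[K₁,K₂,…]` with `Kᵢ` i.i.d.
geometric of parameter `1/2` (mass `2⁻ⁿ` at `n ≥ 1`). -/
def IsMuStar (μ : Measure ℝ) : Prop :=
  ∃ (Ω : Type) (_ : MeasurableSpace Ω) (P : Measure Ω) (K : ℕ → Ω → ℕ),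
    IsProbabilityMeasure P ∧ (∀ i, Measurable (K i)) ∧
    iIndepFun K P ∧
    (∀ i, P.map (K i) = geomHalf) ∧
    μ = P.map (fun ω => cfVal (fun i => K i ω))

noncomputable def gaussIter : ℕ → ℝ → ℝ
  | 0, x => x
  | n + 1, x => gaussIter n (Int.fract x⁻¹)

/-- the `n`-th digit (starting at `n = 0`) of the continued fraction expansion of `x ∈ (0,1)`. -/
noncomputable def cfDigit (x : ℝ) (n : ℕ) : ℕ := ⌊(gaussIter n x)⁻¹⌋₊

/-- the Denjoy–Minkowski function of parameter 1/2. -/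
noncomputable def chiHalf (y : ℝ) : ℝ :=
  ∑' n : ℕ, (-1 : ℝ) ^ n *
    (2 : ℝ) ^ (-(⌊y⌋ + ∑ j ∈ Finset.range n, (cfDigit (Int.fract y) j : ℤ)))

/-- Minkowski's question mark function evaluated at `[k₁,k₂,…]`. -/
noncomputable def qmark (k : ℕ → ℕ) : ℝ :=
  2 * ∑' n : ℕ, (-1 : ℝ) ^ n * (2 : ℝ) ^ (-(∑ j ∈ Finset.range (n + 1), (k j : ℤ)))

/-! Writing `G = {y, -y, y⁻¹, -y⁻¹}` for the Klein four-group acting on `ℝ`, the law `λ` is the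
`G`-average of `ν`, so integrating `f` against `λ` means integrating the orbit sum `kleinSum f`
against `ν`. For `x ≠ 0` the 36 points `hᵢ (g x)`, `g ∈ G`, are the four points `g x` once each
and the sixteen points `g (Hⱼ x)` (`j = 1, …, 4`) twice each, where for `H₃` one uses that
`kleinSum f` is `G`-invariant and so cannot tell `x/(1-x)` from its inverse. Integrating this
identity against `ν` (which charges no rational, in particular not `0`) and using the
stationarity of `ν` turns the nine pushforwards of `λ` into `9 λ`. -/

noncomputable def kleinSum (f : ℝ → ℝ≥0∞) (y : ℝ) : ℝ≥0∞ := f y + f (-y) + f y⁻¹ + f (-y⁻¹)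

lemma kleinSum_inv (f : ℝ → ℝ≥0∞) (y : ℝ) : kleinSum f y⁻¹ = kleinSum f y := by
  simp only [kleinSum, inv_inv]
  ring

lemma kleinSum_min_inv (f : ℝ → ℝ≥0∞) (a : ℝ) : kleinSum f (min a a⁻¹) = kleinSum f a := by
  rcases min_choice a a⁻¹ with h | h <;> simp only [h, kleinSum_inv]

lemma sum_kleinSum_comp_hMap (f : ℝ → ℝ≥0∞) {x : ℝ} (hx : x ≠ 0) :
    ∑ i, kleinSum (f ∘ hMap i) x = kleinSum f x + 2 * ∑ j : Fin 4, kleinSum f (HMap j.succ x) := by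
  have hH₃ : kleinSum f (min (x / (1 - x)) ((1 - x) / x)) = kleinSum f (x / (1 - x)) := by
    rw [← inv_div x (1 - x), kleinSum_min_inv]
  have one_add_inv : 1 + x⁻¹ = (1 + x) / x := by rw [add_div, div_self hx, one_div, add_comm]
  have inv_sub_one : x⁻¹ - 1 = (1 - x) / x := by rw [sub_div, one_div, div_self hx]
  have inv_div_div_self : ∀ b, x⁻¹ / (b / x) = b⁻¹ := fun b => by
    rw [div_div_eq_mul_div, inv_mul_cancel₀ hx, one_div]
  simp only [Fin.sum_univ_succ, Fin.sum_univ_zero, add_zero, hMap, HMap, Matrix.cons_val_succ,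
    Matrix.cons_val_zero]
  rw [hH₃]
  -- normal forms: `±y` and `±y⁻¹` for `y ∈ {x, 1 + x, 1 - x, x / (1 - x), x / (1 + x)}`
  simp only [kleinSum, Function.comp, inv_neg, neg_neg, inv_inv, inv_div, neg_div, div_neg,
    sub_neg_eq_add, ← sub_eq_add_neg, one_add_inv, inv_sub_one, inv_div_div_self,
    show 1 - x⁻¹ = -(x⁻¹ - 1) by ring, show -x⁻¹ - 1 = -(1 + x⁻¹) by ring,
    show -1 - x⁻¹ = -(1 + x⁻¹) by ring, show -1 + x⁻¹ = x⁻¹ - 1 by ring,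
    show x - 1 = -(1 - x) by ring, show -x - 1 = -(1 + x) by ring,
    show -1 - x = -(1 + x) by ring, show -1 + x = -(1 - x) by ring]
  ring

@[fun_prop]
lemma Measurable.kleinSum {f : ℝ → ℝ≥0∞} (hf : Measurable f) : Measurable (kleinSum f) := by
  unfold _root_.kleinSum
  fun_prop

@[fun_prop]
lemma measurable_hMap (i : Fin 9) : Measurable (hMap i) := by
  fin_cases i <;>
    simp only [hMap, Fin.zero_eta, Fin.mk_one, Fin.reduceFinMk, Matrix.cons_val_zero,
      Matrix.cons_val_one, Matrix.cons_val] <;>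
    fun_prop

@[fun_prop]
lemma measurable_HMap (i : Fin 5) : Measurable (HMap i) := by
  fin_cases i <;>
    simp only [HMap, Fin.zero_eta, Fin.mk_one, Fin.reduceFinMk, Matrix.cons_val_zero,
      Matrix.cons_val_one, Matrix.cons_val] <;>
    fun_prop

instance : IsProbabilityMeasure bern := by
  constructor
  simp [bern, ENNReal.inv_two_add_inv_two]

lemma lintegral_bern (g : ℝ → ℝ≥0∞) : ∫⁻ s, g s ∂bern = 2⁻¹ * (g 1 + g (-1)) := by
  simp [bern, lintegral_add_measure, mul_add]

lemma lintegral_map_signedPow (ν : Measure ℝ) {f : ℝ → ℝ≥0∞} (hf : Measurable f) :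
    ∫⁻ y, f y ∂(ν.prod (bern.prod bern)).map (fun p : ℝ × ℝ × ℝ => p.2.2 * p.1 ^ p.2.1) =
      4⁻¹ * ∫⁻ x, kleinSum f x ∂ν := by
  rw [lintegral_map hf (by fun_prop), lintegral_prod _ (by fun_prop),
    ← lintegral_const_mul' _ _ (by norm_num)]
  refine lintegral_congr fun x => ?_
  rw [lintegral_prod _ (by fun_prop)]
  simp only [lintegral_bern, Real.rpow_one, Real.rpow_neg_one, one_mul, neg_one_mul, kleinSum]
  rw [← mul_add, ← mul_assoc, ← ENNReal.mul_inv (by simp) (by simp)]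
  norm_num [add_assoc]

lemma nine_mul_lintegral_of_stationary {ν : Measure ℝ}
    (hstat : (9 : ℝ≥0∞)⁻¹ • ν.map (HMap 0) +
      (2 / 9 : ℝ≥0∞) • ∑ i : Fin 4, ν.map (HMap i.succ) = ν)
    {g : ℝ → ℝ≥0∞} (hg : Measurable g) :
    9 * ∫⁻ x, g x ∂ν = ∫⁻ x, (g x + 2 * ∑ j : Fin 4, g (HMap j.succ x)) ∂ν := by
  conv_lhs => rw [← hstat]
  rw [lintegral_add_left hg, lintegral_const_mul _ (by fun_prop),
    lintegral_finsetSum _ fun j _ => by fun_prop]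
  simp only [lintegral_add_measure, lintegral_smul_measure, lintegral_finsetSum_measure,
    lintegral_map hg (measurable_HMap _), smul_eq_mul, mul_add, ← mul_assoc, Finset.mul_sum,
    ENNReal.mul_inv_cancel (by norm_num : (9 : ℝ≥0∞) ≠ 0) (by norm_num),
    ENNReal.mul_div_cancel (by norm_num : (9 : ℝ≥0∞) ≠ 0) (by norm_num), one_mul,
    show ∀ a, HMap 0 a = a from fun _ => rfl]

theorem stmt5_general (ν : Measure ℝ)
    (hrat : ν {x : ℝ | ¬ Irrational x} = 0)
    (hstat : (9 : ℝ≥0∞)⁻¹ • ν.map (HMap 0) +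
        (2 / 9 : ℝ≥0∞) • ∑ i : Fin 4, ν.map (HMap i.succ) = ν)
    (lam : Measure ℝ)
    (hlam : lam = (ν.prod (bern.prod bern)).map
        (fun p : ℝ × ℝ × ℝ => p.2.2 * p.1 ^ p.2.1)) :
    (9 : ℝ≥0∞)⁻¹ • ∑ i : Fin 9, lam.map (hMap i) = lam := by
  have hne : ∀ᵐ x ∂ν, x ≠ 0 := by
    filter_upwards [ae_iff.2 hrat] with x hx
    exact hx.ne_zero
  refine Measure.ext_of_lintegral _ fun f hf => ?_
  calc ∫⁻ y, f y ∂((9 : ℝ≥0∞)⁻¹ • ∑ i : Fin 9, lam.map (hMap i))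
      = 9⁻¹ * ∑ i, ∫⁻ y, f (hMap i y) ∂lam := by
        simp only [lintegral_smul_measure, lintegral_finsetSum_measure,
          lintegral_map hf (measurable_hMap _), smul_eq_mul]
    _ = 9⁻¹ * (4⁻¹ * ∫⁻ x, ∑ i, kleinSum (f ∘ hMap i) x ∂ν) := by
        simp only [hlam, ← Function.comp_apply (f := f),
          lintegral_map_signedPow ν (hf.comp (measurable_hMap _))]
        rw [← Finset.mul_sum, lintegral_finsetSum _ fun i _ => by fun_prop]
    _ = 9⁻¹ * (4⁻¹ * ∫⁻ x, (kleinSum f x + 2 * ∑ j : Fin 4, kleinSum f (HMap j.succ x)) ∂ν) := by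
        rw [lintegral_congr_ae (hne.mono fun x hx => sum_kleinSum_comp_hMap f hx)]
    _ = 9⁻¹ * (4⁻¹ * (9 * ∫⁻ x, kleinSum f x ∂ν)) := by
        rw [nine_mul_lintegral_of_stationary hstat hf.kleinSum]
    _ = ∫⁻ y, f y ∂lam := by
        rw [hlam, lintegral_map_signedPow ν hf, mul_left_comm,
          ENNReal.inv_mul_cancel_left (by norm_num) (by norm_num)]

theorem stmt5 (ν : Measure ℝ) [IsProbabilityMeasure ν]
    (hsupp : ν (Set.Icc (0 : ℝ) 1)ᶜ = 0)
    (hrat : ν {x : ℝ | ¬ Irrational x} = 0)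
    (hstat : (9 : ℝ≥0∞)⁻¹ • ν.map (HMap 0) +
        (2 / 9 : ℝ≥0∞) • ∑ i : Fin 4, ν.map (HMap i.succ) = ν)
    (lam : Measure ℝ)
    (hlam : lam = (ν.prod (bern.prod bern)).map
        (fun p : ℝ × ℝ × ℝ => p.2.2 * p.1 ^ p.2.1)) :
    (9 : ℝ≥0∞)⁻¹ • ∑ i : Fin 9, lam.map (hMap i) = lam :=
  stmt5_general ν hrat hstat lam hlam
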